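/- arXiv:2510.19218 — 2 statements merged into one kernel-verified Lean document; each statement's English description precedes it below -/
import Mathlib

section
/- Let p be a prime and h ∈ ℤ/(p²−1)ℤ with p·h ≢ h (mod p²−1). Then there exist unique integers r, s with 0 ≤ r ≤ p−1 and 0 ≤ s ≤ p−2 such that h ≡ s(p+1) + r + 1 (mod p²−1). Conversely, every h of this form satisfies p·h ≢ h (mod p²−1). -/
theorem stmt_2 (p : ℕ) (hp : p.Prime) (h : ZMod (p ^ 2 - 1)) :
    ((p : ZMod (p ^ 2 - 1)) * h ≠ h →
      ∃! rs : ℕ × ℕ, rs.1 ≤ p - 1 ∧ rs.2 ≤ p - 2 ∧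
        h = ((rs.2 * (p + 1) + rs.1 + 1 : ℕ) : ZMod (p ^ 2 - 1))) ∧
    (∀ r s : ℕ, r ≤ p - 1 → s ≤ p - 2 →
      (p : ZMod (p ^ 2 - 1)) * ((s * (p + 1) + r + 1 : ℕ) : ZMod (p ^ 2 - 1)) ≠
        ((s * (p + 1) + r + 1 : ℕ) : ZMod (p ^ 2 - 1))) := by
  have hp2 : 2 ≤ p := hp.two_le
  have hsq : p ^ 2 - 1 = (p - 1) * (p + 1) := by
    obtain ⟨q, rfl⟩ : ∃ q, p = q + 2 := ⟨p - 2, by omega⟩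
    show (q + 2) ^ 2 - 1 = (q + 2 - 1) * (q + 2 + 1)
    rw [show q + 2 - 1 = q + 1 from rfl,
      show (q + 2) ^ 2 = (q + 1) * (q + 2 + 1) + 1 from by ring, Nat.add_sub_cancel]
  have hn3 : 3 ≤ p ^ 2 - 1 := by
    have h6 : 1 * 3 ≤ (p - 1) * (p + 1) := Nat.mul_le_mul (by omega) (by omega)
    omega
  haveI : NeZero (p ^ 2 - 1) := ⟨by omega⟩
  have hmm : (p - 1) * (p + 1) = (p + 1) * (p - 1) := Nat.mul_comm _ _
  have hm2 : (p - 1) * (p + 1) = (p - 2) * (p + 1) + (p + 1) := by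
    rw [show p - 1 = (p - 2) + 1 from by omega, Nat.add_mul, Nat.one_mul]
  -- key characterization
  have key : ∀ g : ZMod (p ^ 2 - 1), (p : ZMod (p ^ 2 - 1)) * g = g ↔ (p + 1) ∣ g.val := by
    intro g
    have hg : ((g.val : ℕ) : ZMod (p ^ 2 - 1)) = g := ZMod.natCast_rightInverse g
    constructor
    · intro he
      have hcast : ((p * g.val : ℕ) : ZMod (p ^ 2 - 1)) = ((g.val : ℕ) : ZMod (p ^ 2 - 1)) := by
        push_cast
        rw [hg]; exact he
      have hmod := (ZMod.natCast_eq_natCast_iff _ _ _).mp hcast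
      have hdvd : (p ^ 2 - 1) ∣ p * g.val - g.val :=
        (Nat.modEq_iff_dvd' (Nat.le_mul_of_pos_left _ (by omega))).mp hmod.symm
      generalize hw : g.val = w at hdvd ⊢
      rw [hsq, show p * w - w = (p - 1) * w from by rw [Nat.sub_mul, Nat.one_mul]] at hdvd
      exact (Nat.mul_dvd_mul_iff_left (show 0 < p - 1 by omega)).mp hdvd
    · intro ⟨c, hc⟩
      have hcast : ((p * g.val : ℕ) : ZMod (p ^ 2 - 1)) = ((g.val : ℕ) : ZMod (p ^ 2 - 1)) := by
        rw [ZMod.natCast_eq_natCast_iff]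
        have hdvd : (p ^ 2 - 1) ∣ p * g.val - g.val := by
          rw [hc, hsq,
            show p * ((p + 1) * c) - (p + 1) * c = (p - 1) * ((p + 1) * c) from by
              rw [Nat.sub_mul, Nat.one_mul]]
          exact ⟨c, by ring⟩
        exact ((Nat.modEq_iff_dvd' (Nat.le_mul_of_pos_left _ (by omega))).mpr hdvd).symm
      rw [Nat.cast_mul, hg] at hcast
      exact hcast
  constructor
  · intro hne
    have hnd : ¬ (p + 1) ∣ h.val := fun hd => hne ((key h).mpr hd)
    have hv1 : 1 ≤ h.val := by
      rcases Nat.eq_zero_or_pos h.val with h0 | h0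
      · exact absurd (h0 ▸ dvd_zero (p + 1)) hnd
      · exact h0
    have hvlt : h.val < p ^ 2 - 1 := ZMod.val_lt h
    have hveq : ((h.val : ℕ) : ZMod (p ^ 2 - 1)) = h := ZMod.natCast_rightInverse h
    set v := h.val with hv
    set s := (v - 1) / (p + 1) with hsd
    set r := (v - 1) % (p + 1) with hrd
    have hdm : (p + 1) * s + r = v - 1 := Nat.div_add_mod (v - 1) (p + 1)
    have hrlt : r < p + 1 := Nat.mod_lt _ (by omega)
    have hrle : r ≤ p - 1 := by
      rcases Nat.lt_or_ge r p with h1 | h1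
      · omega
      · exfalso
        have hrp : r = p := by omega
        exact hnd ⟨s + 1, by rw [Nat.mul_add, Nat.mul_one]; omega⟩
    have hsle : s ≤ p - 2 := by
      have h1 : (p + 1) * s < (p + 1) * (p - 1) := by omega
      have h2 := Nat.lt_of_mul_lt_mul_left h1
      omega
    have hval : s * (p + 1) + r + 1 = v := by
      have := Nat.mul_comm s (p + 1)
      omega
    refine ⟨(r, s), ⟨hrle, hsle, ?_⟩, ?_⟩
    · show h = ((s * (p + 1) + r + 1 : ℕ) : ZMod (p ^ 2 - 1))
      rw [hval]
      exact hveq.symm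
    · rintro ⟨r', s'⟩ ⟨hr', hs', heq⟩
      simp only at hr' hs' heq
      have hwlt : s' * (p + 1) + r' + 1 < p ^ 2 - 1 := by
        have h1 : s' * (p + 1) ≤ (p - 2) * (p + 1) := Nat.mul_le_mul_right _ hs'
        omega
      have hweq : s' * (p + 1) + r' + 1 = v := by
        have hc := congrArg ZMod.val heq
        rw [ZMod.val_cast_of_lt hwlt] at hc
        omega
      have hd : v - 1 = (p + 1) * s' + r' := by
        have := Nat.mul_comm s' (p + 1)
        omega
      have hs'' : s' = s := by
        rw [hsd, hd, Nat.mul_add_div (show 0 < p + 1 by omega),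
          Nat.div_eq_of_lt (show r' < p + 1 by omega)]
        omega
      have hr'' : r' = r := by
        rw [hrd, hd, Nat.mul_add_mod, Nat.mod_eq_of_lt (show r' < p + 1 by omega)]
      simp [hr'', hs'']
  · intro r s hr hs hcontra
    have hwlt : s * (p + 1) + r + 1 < p ^ 2 - 1 := by
      have h1 : s * (p + 1) ≤ (p - 2) * (p + 1) := Nat.mul_le_mul_right _ hs
      omega
    have hdvd := (key _).mp hcontra
    rw [ZMod.val_cast_of_lt hwlt] at hdvd
    have hdr : (p + 1) ∣ r + 1 := by
      have h1 : (p + 1) ∣ s * (p + 1) := Dvd.intro_left s rfl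
      have h2 := Nat.dvd_sub hdvd h1
      rwa [show s * (p + 1) + r + 1 - s * (p + 1) = r + 1 from by omega] at h2
    have := Nat.le_of_dvd (by omega) hdr
    omega
end

section
/- Let R be a noetherian commutative ring, M a finitely generated R-module, x ∈ R, and suppose the x-power torsion submodule M_tor equals M[x^m]. Then for this m there is a short exact sequence 0 → M_tor → M/x^m M → M_tf/x^m M_tf → 0, where M_tf = M/M_tor, with the first map induced by inclusion M_tor ⊆ M composed with the quotient M → M/x^mM. -/
private lemma mem_span_smul_top_iff {R M : Type*} [CommRing R] [AddCommGroup M] [Module R M]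
    (r : R) (y : M) :
    y ∈ Ideal.span {r} • (⊤ : Submodule R M) ↔ ∃ z : M, r • z = y := by
  rw [Submodule.ideal_span_singleton_smul]
  constructor
  · rintro h
    obtain ⟨z, -, hz⟩ := Set.mem_smul_set.mp h
    exact ⟨z, hz⟩
  · rintro ⟨z, hz⟩
    exact hz ▸ Submodule.smul_mem_pointwise_smul z r ⊤ trivial

/-- Let `R` be noetherian, `M` finitely generated, `x ∈ R`, and `m` such that the `x`-power
torsion submodule `M_tor` equals `M[x^m]`.  Then there is a short exact sequence
`0 → M_tor → M/x^m M → M_tf/x^m M_tf → 0`, where `M_tf = M/M_tor`, the first map being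
induced by the inclusion `M_tor ⊆ M` followed by the quotient map, and the second by the
quotient map `M → M_tf`. -/
theorem stmt_11 (R : Type*) [CommRing R] [IsNoetherianRing R]
    (M : Type*) [AddCommGroup M] [Module R M] [Module.Finite R M] (x : R)
    (m : ℕ) (hm1 : 1 ≤ m)
    (hm : ∀ y : M, y ∈ Submodule.torsion' R M (Submonoid.powers x) ↔ x ^ m • y = 0) :
    Function.Injective
      ((Ideal.span {x ^ m} • (⊤ : Submodule R M)).mkQ.comp
        (Submodule.torsion' R M (Submonoid.powers x)).subtype) ∧
    ∃ β : (M ⧸ Ideal.span {x ^ m} • (⊤ : Submodule R M)) →ₗ[R]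
        ((M ⧸ Submodule.torsion' R M (Submonoid.powers x)) ⧸
          Ideal.span {x ^ m} •
            (⊤ : Submodule R (M ⧸ Submodule.torsion' R M (Submonoid.powers x)))),
      (∀ y : M, β (Submodule.Quotient.mk y) = Submodule.Quotient.mk (Submodule.Quotient.mk y)) ∧
      Function.Surjective β ∧
      LinearMap.range
        ((Ideal.span {x ^ m} • (⊤ : Submodule R M)).mkQ.comp
          (Submodule.torsion' R M (Submonoid.powers x)).subtype) = LinearMap.ker β := by
  set T := Submodule.torsion' R M (Submonoid.powers x) with hT
  set N := Ideal.span {x ^ m} • (⊤ : Submodule R M) with hN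
  set N' := Ideal.span {x ^ m} • (⊤ : Submodule R (M ⧸ T)) with hN'
  have key : ∀ y : M, y ∈ T → y ∈ N → y = 0 := by
    intro y hyT hyN
    obtain ⟨z, hz⟩ := (mem_span_smul_top_iff _ _).mp hyN
    have h1 : x ^ m • y = 0 := (hm y).mp hyT
    have h2 : x ^ (m + m) • z = 0 := by
      rw [pow_add, mul_smul, hz, h1]
    have hzT : z ∈ T := ⟨⟨x ^ (m + m), ⟨m + m, rfl⟩⟩, h2⟩
    rw [← hz, (hm z).mp hzT]
  constructor
  · rw [← LinearMap.ker_eq_bot, LinearMap.ker_eq_bot']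
    rintro ⟨y, hy⟩ h
    have : y ∈ N := by
      simpa [Submodule.Quotient.mk_eq_zero] using h
    exact Subtype.ext (key y hy this)
  · have hg : N ≤ LinearMap.ker (N'.mkQ.comp T.mkQ) := by
      intro y hy
      obtain ⟨z, hz⟩ := (mem_span_smul_top_iff _ _).mp hy
      simp only [LinearMap.mem_ker, LinearMap.comp_apply, Submodule.mkQ_apply,
        Submodule.Quotient.mk_eq_zero]
      rw [← hz, Submodule.Quotient.mk_smul]
      exact hN' ▸ Submodule.smul_mem_smul (Ideal.mem_span_singleton_self _) trivial
    refine ⟨Submodule.liftQ N (N'.mkQ.comp T.mkQ) hg, fun y => rfl, ?_, ?_⟩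
    · intro a
      obtain ⟨b, rfl⟩ := Submodule.Quotient.mk_surjective _ a
      obtain ⟨y, rfl⟩ := Submodule.Quotient.mk_surjective _ b
      exact ⟨Submodule.Quotient.mk y, rfl⟩
    · ext a
      simp only [LinearMap.mem_range, LinearMap.mem_ker]
      constructor
      · rintro ⟨⟨y, hy⟩, rfl⟩
        simp only [LinearMap.comp_apply, Submodule.subtype_apply, Submodule.mkQ_apply,
          Submodule.liftQ_apply]
        have : (Submodule.Quotient.mk y : M ⧸ T) = 0 := (Submodule.Quotient.mk_eq_zero _).mpr hy
        simp [this]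
      · intro ha
        obtain ⟨y, rfl⟩ := Submodule.Quotient.mk_surjective _ a
        rw [Submodule.liftQ_apply] at ha
        simp only [LinearMap.comp_apply, Submodule.mkQ_apply,
          Submodule.Quotient.mk_eq_zero] at ha
        obtain ⟨w, hw⟩ := (mem_span_smul_top_iff _ _).mp ha
        obtain ⟨z, rfl⟩ := Submodule.Quotient.mk_surjective _ w
        have hmem : y - x ^ m • z ∈ T := by
          rw [← Submodule.Quotient.mk_eq_zero (p := T), Submodule.Quotient.mk_sub,
            Submodule.Quotient.mk_smul, hw, sub_self]
        refine ⟨⟨y - x ^ m • z, hmem⟩, ?_⟩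
        simp only [LinearMap.comp_apply, Submodule.subtype_apply, Submodule.mkQ_apply]
        rw [Submodule.Quotient.mk_sub]
        have : (Submodule.Quotient.mk (x ^ m • z) : M ⧸ N) = 0 := by
          rw [Submodule.Quotient.mk_eq_zero]
          exact (mem_span_smul_top_iff _ _).mpr ⟨z, rfl⟩
        rw [this, sub_zero]
end
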